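/- arXiv:2011.01027 — 3 statements merged into one kernel-verified Lean document; each statement's English description precedes it below -/
import Mathlib

section
/- The set {w ∈ ℂ : |w(1+w)| = 1} is homeomorphic to the circle S¹. -/
/-!
Writing `w = -1/2 + r u` with `r > 0` and `‖u‖ = 1` turns `w (1 + w)` into `r² u² - 1/4`, and
`‖r² u² - 1/4‖ = 1` becomes the quadratic `(r²)² = (Re (u²) / 2) r² + 15/16` in `r²`, which has
exactly one positive root. So the curve meets every ray from `-1/2` exactly once, at a distance
depending continuously on the direction, and radial projection from `-1/2` is a homeomorphism
onto the unit circle.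
-/

open Metric

lemma abs_lt_sqrt_sq_add (b : ℝ) {c : ℝ} (hc : 0 < c) : |b| < √(b ^ 2 + 4 * c) := by
  rw [← Real.sqrt_sq_eq_abs]
  exact Real.sqrt_lt_sqrt (sq_nonneg b) (by linarith)

noncomputable def quadraticPosRoot (b c : ℝ) : ℝ := (b + √(b ^ 2 + 4 * c)) / 2

section QuadraticPosRoot

variable {b c : ℝ}

lemma quadraticPosRoot_pos (hc : 0 < c) : 0 < quadraticPosRoot b c := by
  have := abs_lt_sqrt_sq_add b hc
  unfold quadraticPosRoot
  linarith [neg_abs_le b]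

lemma quadraticPosRoot_sq (hc : 0 < c) :
    quadraticPosRoot b c ^ 2 = b * quadraticPosRoot b c + c := by
  have h : √(b ^ 2 + 4 * c) ^ 2 = b ^ 2 + 4 * c := Real.sq_sqrt (by positivity)
  unfold quadraticPosRoot
  linear_combination h / 4

lemma sq_eq_iff_eq_quadraticPosRoot (hc : 0 < c) {s : ℝ} (hs : 0 < s) :
    s ^ 2 = b * s + c ↔ s = quadraticPosRoot b c := by
  refine ⟨fun h => ?_, fun h => h ▸ quadraticPosRoot_sq hc⟩
  -- the other root `b - quadraticPosRoot b c = -c / quadraticPosRoot b c` is negative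
  have hsum : 0 < s + quadraticPosRoot b c - b := by
    have := abs_lt_sqrt_sq_add b hc
    unfold quadraticPosRoot
    linarith [le_abs_self b]
  have hprod : (s - quadraticPosRoot b c) * (s + quadraticPosRoot b c - b) = 0 := by
    linear_combination h - quadraticPosRoot_sq (b := b) hc
  exact sub_eq_zero.1 ((mul_eq_zero.1 hprod).resolve_right hsum.ne')

end QuadraticPosRoot

section Radial

variable {E : Type*} [NormedAddCommGroup E] [NormedSpace ℝ E]

noncomputable def homeomorphSphereOfRadial (S : Set E) (c : E) (ρ : sphere (0 : E) 1 → ℝ)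
    (hρ : Continuous ρ) (hρ_pos : ∀ u, 0 < ρ u) (hc : c ∉ S)
    (hS : ∀ u : sphere (0 : E) 1, ∀ r : ℝ, 0 < r → (c + r • (u : E) ∈ S ↔ r = ρ u)) :
    S ≃ₜ sphere (0 : E) 1 where
  toFun x := ⟨‖(x : E) - c‖⁻¹ • ((x : E) - c), by
    have : (x : E) - c ≠ 0 := sub_ne_zero.2 (ne_of_mem_of_not_mem x.2 hc)
    simp [norm_smul, this]⟩
  invFun u := ⟨c + ρ u • (u : E), (hS u _ (hρ_pos u)).2 rfl⟩
  left_inv x := by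
    have hr : 0 < ‖(x : E) - c‖ := norm_pos_iff.2 (sub_ne_zero.2 (ne_of_mem_of_not_mem x.2 hc))
    set u : sphere (0 : E) 1 := ⟨‖(x : E) - c‖⁻¹ • ((x : E) - c), by simp [norm_smul, hr.ne']⟩
    have hx : c + ‖(x : E) - c‖ • (u : E) = x := by
      simp [u, smul_smul, hr.ne']
    have hρu : ‖(x : E) - c‖ = ρ u := (hS u _ hr).1 (by rw [hx]; exact x.2)
    ext
    change c + ρ u • (u : E) = x
    rw [← hρu, hx]
  right_inv u := by
    have hu : ‖(u : E)‖ = 1 := by simp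
    ext
    simp [norm_smul, hu, abs_of_pos (hρ_pos u), smul_smul, (hρ_pos u).ne']
  continuous_toFun := by
    refine Continuous.subtype_mk (Continuous.smul ?_ (by fun_prop)) _
    exact (by fun_prop : Continuous fun x : S => ‖(x : E) - c‖).inv₀
      fun x => norm_ne_zero_iff.2 (sub_ne_zero.2 (ne_of_mem_of_not_mem x.2 hc))
  continuous_invFun := by
    fun_prop

end Radial

lemma Complex.norm_ofReal_mul_sub_ofReal_sq (a b : ℝ) {z : ℂ} (hz : ‖z‖ = 1) :
    ‖(a : ℂ) * z - b‖ ^ 2 = a ^ 2 - 2 * a * b * z.re + b ^ 2 := by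
  have hz' : z.re ^ 2 + z.im ^ 2 = 1 := by
    simpa [Complex.normSq_apply, sq, hz] using (Complex.normSq_eq_norm_sq z)
  rw [← Complex.normSq_eq_norm_sq, Complex.normSq_apply]
  simp only [Complex.sub_re, Complex.sub_im, Complex.mul_re, Complex.mul_im, Complex.ofReal_re,
    Complex.ofReal_im]
  linear_combination a ^ 2 * hz'

noncomputable def giesekingRadius (u : ℂ) : ℝ := √(quadraticPosRoot ((u ^ 2).re / 2) (15 / 16))

lemma giesekingRadius_pos (u : ℂ) : 0 < giesekingRadius u :=
  Real.sqrt_pos.2 (quadraticPosRoot_pos (by norm_num))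

lemma continuous_giesekingRadius : Continuous giesekingRadius := by
  unfold giesekingRadius quadraticPosRoot
  fun_prop

lemma norm_mul_one_add_eq_one_iff_eq_giesekingRadius {u : ℂ} (hu : ‖u‖ = 1) {r : ℝ}
    (hr : 0 < r) :
    ‖(-1 / 2 + r • u) * (1 + (-1 / 2 + r • u))‖ = 1 ↔ r = giesekingRadius u := by
  have hu2 : ‖u ^ 2‖ = 1 := by simp [hu]
  have hprod : (-1 / 2 + r • u) * (1 + (-1 / 2 + r • u)) =
      ((r ^ 2 : ℝ) : ℂ) * u ^ 2 - (1 / 4 : ℝ) := by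
    simp only [Complex.real_smul]; push_cast; ring
  rw [hprod, ← pow_eq_one_iff_of_nonneg (norm_nonneg _) two_ne_zero,
    Complex.norm_ofReal_mul_sub_ofReal_sq _ _ hu2, giesekingRadius,
    eq_comm (a := r), Real.sqrt_eq_iff_eq_sq (quadraticPosRoot_pos (by norm_num)).le hr.le,
    eq_comm (b := r ^ 2), ← sq_eq_iff_eq_quadraticPosRoot (by norm_num) (by positivity)]
  constructor <;> intro h <;> linear_combination h

/-- The set `{w ∈ ℂ : |w(1+w)| = 1}` is homeomorphic to the circle `S¹`. -/
theorem gieseking_solution_set_homeomorphic_circle :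
    Nonempty (({w : ℂ | ‖w * (1 + w)‖ = 1} : Set ℂ) ≃ₜ
      (Metric.sphere (0 : ℂ) 1 : Set ℂ)) := by
  refine ⟨homeomorphSphereOfRadial _ (-1 / 2) (fun u => giesekingRadius u)
    (continuous_giesekingRadius.comp continuous_subtype_val) (fun u => giesekingRadius_pos u)
    ?_ fun u r hr => norm_mul_one_add_eq_one_iff_eq_giesekingRadius (by simp) hr⟩
  norm_num
end

section
/- The image of the map w ↦ 1 + w + |w|² restricted to {w ∈ ℂ : |w(1+w)| = 1} equals {x ∈ ℂ : |x - 1| = 1 and Re(x) ≥ 3/2}. -/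
/-!
Writing `s = |w|²`, one has `w + s = w (1 + w̄)`, so `|x - 1| = |w + s| = |w (1 + w)| = 1`.
Moreover `|w (1 + w)|² = s (1 + 2 Re w + s) = 1` gives `2 Re x = 1 + s + s⁻¹ ≥ 3`.
Conversely, for `z = x - 1` on the unit circle with `2 Re z + 1 = s + s⁻¹`, the point
`w = z - s` has `|w|² = 1 - 2 s Re z + s² = s`, hence `w + |w|² = z`.
-/

open Complex ComplexConjugate

theorem Real.exists_add_inv_eq {c : ℝ} (hc : 2 ≤ c) : ∃ s > 0, s + s⁻¹ = c := by
  have hdisc : 0 ≤ c ^ 2 - 4 := by nlinarith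
  have ht : √(c ^ 2 - 4) ^ 2 = c ^ 2 - 4 := Real.sq_sqrt hdisc
  have hpos : 0 < c + √(c ^ 2 - 4) := by positivity
  refine ⟨(c + √(c ^ 2 - 4)) / 2, half_pos hpos, ?_⟩
  field_simp
  nlinarith

namespace Complex

theorem norm_add_normSq (w : ℂ) : ‖w + (normSq w : ℂ)‖ = ‖w * (1 + w)‖ := by
  have hconj : w + (normSq w : ℂ) = w * conj (1 + w) := by
    rw [map_add, map_one, mul_add, mul_one, mul_conj]
  rw [hconj, norm_mul, norm_mul, norm_conj]

theorem normSq_mul_one_add (w : ℂ) :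
    normSq (w * (1 + w)) = normSq w * (1 + 2 * w.re + normSq w) := by
  rw [normSq_mul, normSq_add, normSq_one, one_mul, conj_re]
  ring

theorem three_halves_le_one_add_re_add_normSq {w : ℂ} (hw : ‖w * (1 + w)‖ = 1) :
    3 / 2 ≤ 1 + w.re + normSq w := by
  have hprod : normSq w * (1 + 2 * w.re + normSq w) = 1 := by
    rw [← normSq_mul_one_add, ← Complex.sq_norm, hw, one_pow]
  have hpos : 0 < normSq w := by
    refine (normSq_nonneg w).lt_of_ne fun h => ?_
    rw [← h, zero_mul] at hprod
    exact zero_ne_one hprod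
  nlinarith [sq_nonneg (normSq w - 1)]

theorem exists_normSq_sub_ofReal_eq {z : ℂ} (hz : ‖z‖ = 1) (hre : 1 / 2 ≤ z.re) :
    ∃ s : ℝ, normSq (z - s) = s := by
  obtain ⟨s, hs, hsum⟩ := Real.exists_add_inv_eq (c := 2 * z.re + 1) (by linarith)
  refine ⟨s, ?_⟩
  have hz2 : normSq z = 1 := by rw [← Complex.sq_norm, hz, one_pow]
  rw [normSq_sub, hz2, normSq_ofReal, conj_ofReal, mul_re, ofReal_re, ofReal_im]
  field_simp at hsum
  nlinarith

end Complex

/-- The image of `w ↦ 1 + w + |w|²` on `{w : |w(1+w)| = 1}` is the arc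
`{x : |x-1| = 1, Re x ≥ 3/2}`. -/
theorem gieseking_trace_image :
    (fun w : ℂ => 1 + w + ((‖w‖ : ℝ) : ℂ) ^ 2) ''
        {w : ℂ | ‖w * (1 + w)‖ = 1}
      = {x : ℂ | ‖x - 1‖ = 1 ∧ 3 / 2 ≤ x.re} := by
  have hnorm (w : ℂ) : ((‖w‖ : ℝ) : ℂ) ^ 2 = (normSq w : ℂ) := by
    rw [← ofReal_pow, Complex.sq_norm]
  ext x
  simp only [Set.mem_image, Set.mem_ofPred_eq, hnorm]
  constructor
  · rintro ⟨w, hw, rfl⟩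
    refine ⟨by rw [add_assoc, add_sub_cancel_left, norm_add_normSq, hw], ?_⟩
    simpa using three_halves_le_one_add_re_add_normSq hw
  · rintro ⟨hx, hre⟩
    obtain ⟨s, hs⟩ := exists_normSq_sub_ofReal_eq hx (by rw [sub_re, one_re]; linarith)
    refine ⟨x - 1 - s, ?_, by rw [hs]; ring⟩
    rw [← norm_add_normSq, hs, sub_add_cancel, hx]
end

section
/- Let U, V : ℂ ∪ {∞} → ℂ ∪ {∞} be the anti-Möbius maps U(z) = 1/(((1+ω)/|ω|²)·conj(z) + 1) and V(z) = −(1+ω)·conj(z) + 1, for ω ∈ ℂ with Im(ω) > 0. Then U⁻¹V⁻¹U²V² is the identity transformation if and only if |ω(1+ω)| = 1. -/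
open Complex

/-- The anti-Möbius map `U(z) = 1/(((1+ω)/|ω|²) conj z + 1)` on `ℂ ∪ {∞}`,
modelled on `Option ℂ` (`none` being `∞`). -/
noncomputable def giesekingU (ω : ℂ) : Option ℂ → Option ℂ := fun z =>
  match z with
  | none => some 0
  | some z =>
      if (1 + ω) / ((‖ω‖ : ℝ) : ℂ) ^ 2 * (starRingEnd ℂ) z + 1 = 0 then none
      else some (1 / ((1 + ω) / ((‖ω‖ : ℝ) : ℂ) ^ 2 * (starRingEnd ℂ) z + 1))

/-- The anti-Möbius map `V(z) = -(1+ω) conj z + 1` on `ℂ ∪ {∞}`. -/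
noncomputable def giesekingV (ω : ℂ) : Option ℂ → Option ℂ := fun z =>
  match z with
  | none => none
  | some z => some (-(1 + ω) * (starRingEnd ℂ) z + 1)

/-!
`U` and `V` are of the form `z ↦ g • conj z` for matrices `g ∈ GL₂(ℂ)`, so a composite of two of
them is the Möbius map of `g * conj h`. Two Möbius maps agree on `ℂ ∪ {∞}` iff their matrices are
proportional (evaluate at `∞`, `0`, `1`), so the relation `U²V² = VU` becomes the proportionality
of two explicit `2 × 2` matrices; comparing entries, it says `|ω|² |1 + ω|² = 1`.
-/

open ComplexConjugate

namespace OnePoint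

variable {K : Type*} [Field K] [DecidableEq K]

theorem forall_smul_eq_self_iff {g : GL (Fin 2) K} :
    (∀ x : OnePoint K, g • x = x) ↔ ∃ c : K, (g : Matrix (Fin 2) (Fin 2) K) = c • 1 := by
  have hdet := g.det_ne_zero
  rw [Matrix.det_fin_two] at hdet
  constructor
  · intro h
    have h10 : g 1 0 = 0 := smul_infty_eq_self_iff.mp (h ∞)
    have h11 : g 1 1 ≠ 0 := by rintro h11; simp [h10, h11] at hdet
    have h01 : g 0 1 = 0 := by
      have h0 := h ((0 : K) : OnePoint K)
      rw [smul_some_eq_ite] at h0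
      simpa [h10, h11] using h0
    have h00 : g 0 0 = g 1 1 := by
      have h1 := h ((1 : K) : OnePoint K)
      rw [smul_some_eq_ite] at h1
      simpa [h10, h11, h01, div_eq_one_iff_eq] using h1
    refine ⟨g 0 0, Matrix.ext fun i j => ?_⟩
    fin_cases i <;> fin_cases j <;> simp [h00, h01, h10]
  · rintro ⟨c, hc⟩ x
    have hc0 : c ≠ 0 := by rintro rfl; simp [hc] at hdet
    cases x with
    | infty => simp [smul_infty_eq_self_iff, hc]
    | coe k => simp [smul_some_eq_ite, hc, hc0]

theorem forall_smul_eq_smul_iff {g h : GL (Fin 2) K} :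
    (∀ x : OnePoint K, g • x = h • x) ↔ ∃ c : K, (g : Matrix (Fin 2) (Fin 2) K) = c • h := by
  have (x : OnePoint K) : g • x = h • x ↔ (h⁻¹ * g) • x = x := by
    rw [mul_smul, inv_smul_eq_iff]
  simp_rw [this, forall_smul_eq_self_iff, Units.val_mul, Units.inv_mul_eq_iff_eq_mul,
    mul_smul_comm, mul_one]

end OnePoint

section AntiMobius

variable {K : Type*} [Field K] [StarRing K] [DecidableEq K]

def antiMobius (g : GL (Fin 2) K) (x : OnePoint K) : OnePoint K :=
  g • OnePoint.map (starRingEnd K) x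

theorem antiMobius_antiMobius (g h : GL (Fin 2) K) (x : OnePoint K) :
    antiMobius g (antiMobius h x) = (g * Matrix.GeneralLinearGroup.map (starRingEnd K) h) • x := by
  rw [antiMobius, antiMobius, OnePoint.map_smul, ← Function.comp_apply (f := OnePoint.map _),
    ← OnePoint.map_comp, show ⇑(starRingEnd K) ∘ ⇑(starRingEnd K) = id from funext star_star,
    OnePoint.map_id, id, mul_smul]

end AntiMobius

theorem Complex.norm_eq_one_iff_mul_conj_eq_one {z : ℂ} : ‖z‖ = 1 ↔ z * conj z = 1 := by
  rw [mul_conj', ← ofReal_pow, ofReal_eq_one,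
    pow_eq_one_iff_of_nonneg (norm_nonneg z) two_ne_zero]

noncomputable def giesekingUMatrix (ω : ℂ) : Matrix (Fin 2) (Fin 2) ℂ :=
  !![0, 1; (1 + ω) / (‖ω‖ : ℂ) ^ 2, 1]

def giesekingVMatrix (ω : ℂ) : Matrix (Fin 2) (Fin 2) ℂ :=
  !![-(1 + ω), 1; 0, 1]

-- `OnePoint ℂ` is `Option ℂ` by definition; the `rfl`s identify their points.
theorem exists_giesekingU_eq_antiMobius {ω : ℂ} (h0 : ω ≠ 0) (h1 : 1 + ω ≠ 0) :
    ∃ g : GL (Fin 2) ℂ, (g : Matrix (Fin 2) (Fin 2) ℂ) = giesekingUMatrix ω ∧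
      ∀ z : OnePoint ℂ, giesekingU ω z = antiMobius g z := by
  refine ⟨.mkOfDetNeZero (giesekingUMatrix ω) ?_, rfl, fun z => ?_⟩
  · simp [giesekingUMatrix, Matrix.det_fin_two_of, h0, h1]
  cases z with
  | infty =>
    simp [antiMobius, OnePoint.smul_infty_eq_ite, giesekingUMatrix, h0, h1, giesekingU]; rfl
  | coe z => simp [antiMobius, OnePoint.smul_some_eq_ite, giesekingUMatrix, giesekingU]; rfl

theorem exists_giesekingV_eq_antiMobius {ω : ℂ} (h1 : 1 + ω ≠ 0) :
    ∃ g : GL (Fin 2) ℂ, (g : Matrix (Fin 2) (Fin 2) ℂ) = giesekingVMatrix ω ∧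
      ∀ z : OnePoint ℂ, giesekingV ω z = antiMobius g z := by
  refine ⟨.mkOfDetNeZero (giesekingVMatrix ω) ?_, rfl, fun z => ?_⟩
  · simpa [giesekingVMatrix, Matrix.det_fin_two_of] using neg_ne_zero.mpr h1
  cases z with
  | infty => simp [antiMobius, OnePoint.smul_infty_eq_ite, giesekingVMatrix, giesekingV]; rfl
  | coe z => simp [antiMobius, OnePoint.smul_some_eq_ite, giesekingVMatrix, giesekingV]; rfl

theorem giesekingMatrix_proportional_iff {ω : ℂ} (h0 : ω ≠ 0) (h1 : 1 + ω ≠ 0) :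
    (∃ c : ℂ, giesekingUMatrix ω * (giesekingUMatrix ω).map conj *
        (giesekingVMatrix ω * (giesekingVMatrix ω).map conj) =
      c • (giesekingVMatrix ω * (giesekingUMatrix ω).map conj)) ↔ ‖ω * (1 + ω)‖ = 1 := by
  have h0' : conj ω ≠ 0 := (map_ne_zero _).mpr h0
  have h1' : 1 + conj ω ≠ 0 := by simpa using (map_ne_zero conj).mpr h1
  have hs : (1 + conj ω) / (conj ω * ω) ≠ 0 := div_ne_zero h1' (mul_ne_zero h0' h0)
  simp only [giesekingUMatrix, giesekingVMatrix, ← Matrix.ext_iff, Fin.forall_fin_two,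
    Matrix.mul_apply, Fin.sum_univ_two, Matrix.smul_apply, Matrix.map_apply, Matrix.of_apply,
    Matrix.cons_val', Matrix.cons_val_zero, Matrix.cons_val_one, Matrix.empty_val',
    Matrix.cons_val_fin_one, smul_eq_mul, map_zero, map_one, map_neg, map_add, map_mul, map_div₀,
    ← mul_conj', conj_conj, norm_eq_one_iff_mul_conj_eq_one, mul_zero, zero_mul, mul_one, one_mul,
    add_zero, zero_add]
  constructor
  · rintro ⟨c, ⟨h00, -⟩, -, h11⟩
    have hc : c = (1 + ω) * (1 + conj ω) := mul_right_cancel₀ hs (by rw [← h00]; ring)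
    subst hc
    field_simp at h11
    linear_combination -h11
  · intro h
    refine ⟨(1 + ω) * (1 + conj ω), ⟨by ring, ?_⟩, by ring, ?_⟩ <;> field_simp
    · linear_combination ω * h
    · linear_combination -h

/-- The edge-cycle condition `U⁻¹V⁻¹U²V² = Id` (equivalently `U²V² = VU` as
transformations of `ℂ ∪ {∞}`) holds iff `|ω(1+ω)| = 1`. -/
theorem gieseking_edge_cycle_iff (ω : ℂ) (hω : 0 < ω.im) :
    (giesekingU ω ∘ giesekingU ω ∘ giesekingV ω ∘ giesekingV ω
        = giesekingV ω ∘ giesekingU ω) ↔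
      ‖ω * (1 + ω)‖ = 1 := by
  have h0 : ω ≠ 0 := by rintro rfl; simp at hω
  have h1 : 1 + ω ≠ 0 := fun h => by simp [eq_neg_of_add_eq_zero_right h] at hω
  obtain ⟨gU, hgU, hU⟩ := exists_giesekingU_eq_antiMobius h0 h1
  obtain ⟨gV, hgV, hV⟩ := exists_giesekingV_eq_antiMobius h1
  set σ := Matrix.GeneralLinearGroup.map (n := Fin 2) (starRingEnd ℂ) with hσ
  have hL (x : OnePoint ℂ) :
      giesekingU ω (giesekingU ω (giesekingV ω (giesekingV ω x))) =
        (gU * σ gU * (gV * σ gV)) • x := by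
    rw [hV, hV, antiMobius_antiMobius, hU, hU, antiMobius_antiMobius, ← mul_smul]
  have hR (x : OnePoint ℂ) : giesekingV ω (giesekingU ω x) = (gV * σ gU) • x := by
    rw [hU, hV, antiMobius_antiMobius]
  calc _ ↔ ∀ x : OnePoint ℂ, (gU * σ gU * (gV * σ gV)) • x = (gV * σ gU) • x :=
        funext_iff.trans (forall_congr' fun x => by rw [← hL x, ← hR x]; rfl)
    _ ↔ _ := by
      rw [OnePoint.forall_smul_eq_smul_iff]
      simp only [hσ, Units.val_mul, Matrix.GeneralLinearGroup.val_map_apply, hgU, hgV]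
      exact giesekingMatrix_proportional_iff h0 h1
end
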